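/- Let A be an m×n matrix, T an index set with |T| = k and δ_k(A) < 1, and let Ť_d, T_d be index sets disjoint from T and from each other with |Ť_d| ≤ Š and |T_d| ≤ S. Define M = I - A_T(A_Tᵀ A_T)^{-1} A_Tᵀ. Then ‖A_{Ť_d}ᵀ M A_{T_d}‖ ≤ θ_{Š,S} + θ_{Š,k} θ_{S,k}/(1 - δ_k). -/

import Mathlib

open Matrix BigOperators Finset

noncomputable def cols {m n : ℕ} (A : Matrix (Fin m) (Fin n) ℝ) (T : Finset (Fin n)) :
    Matrix (Fin m) {j // j ∈ T} ℝ :=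
  Matrix.of fun i j => A i j.1

noncomputable def l2 {ι : Type*} [Fintype ι] (v : ι → ℝ) : ℝ :=
  Real.sqrt (∑ i, v i ^ 2)

/-- `δ` is a valid `S`-restricted-isometry bound for `A`. -/
def RIPBound {m n : ℕ} (A : Matrix (Fin m) (Fin n) ℝ) (S : ℕ) (δ : ℝ) : Prop :=
  ∀ T : Finset (Fin n), T.card ≤ S → ∀ c : {j // j ∈ T} → ℝ,
    (1 - δ) * (∑ j, c j ^ 2) ≤ (∑ i, ((cols A T).mulVec c i) ^ 2) ∧
    (∑ i, ((cols A T).mulVec c i) ^ 2) ≤ (1 + δ) * (∑ j, c j ^ 2)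

/-- The `S`-restricted isometry constant `δ_S(A)`: the smallest valid RIP bound. -/
noncomputable def ripConst {m n : ℕ} (A : Matrix (Fin m) (Fin n) ℝ) (S : ℕ) : ℝ :=
  sInf {δ : ℝ | 0 ≤ δ ∧ RIPBound A S δ}

/-- `θ` is a valid `(S₁,S₂)`-restricted-orthogonality bound for `A`. -/
def ROCBound {m n : ℕ} (A : Matrix (Fin m) (Fin n) ℝ) (S₁ S₂ : ℕ) (θ : ℝ) : Prop :=
  ∀ T₁ T₂ : Finset (Fin n), Disjoint T₁ T₂ → T₁.card ≤ S₁ → T₂.card ≤ S₂ →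
    ∀ c₁ : {j // j ∈ T₁} → ℝ, ∀ c₂ : {j // j ∈ T₂} → ℝ,
      |∑ i, (cols A T₁).mulVec c₁ i * (cols A T₂).mulVec c₂ i| ≤ θ * l2 c₁ * l2 c₂

/-- The restricted orthogonality constant `θ_{S₁,S₂}(A)`. -/
noncomputable def rocConst {m n : ℕ} (A : Matrix (Fin m) (Fin n) ℝ) (S₁ S₂ : ℕ) : ℝ :=
  sInf {θ : ℝ | 0 ≤ θ ∧ ROCBound A S₁ S₂ θ}

/-- `a_k(S, Š)` from Modified-CS. -/
noncomputable def aConst {m n : ℕ} (A : Matrix (Fin m) (Fin n) ℝ) (k S S' : ℕ) : ℝ :=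
  (rocConst A S' S + rocConst A S' k * rocConst A S k / (1 - ripConst A k)) /
    (1 - ripConst A S - (rocConst A S k) ^ 2 / (1 - ripConst A k))

/-- `M = I - A_T (A_Tᵀ A_T)⁻¹ A_Tᵀ`, projection onto orthogonal complement of span of `A_T`. -/
noncomputable def projM {m n : ℕ} (A : Matrix (Fin m) (Fin n) ℝ) (T : Finset (Fin n)) :
    Matrix (Fin m) (Fin m) ℝ :=
  1 - cols A T * ((cols A T)ᵀ * cols A T)⁻¹ * (cols A T)ᵀ

/-! Let `y = A_{T_d} v` and let `u` be the least-squares coefficients of `y` on the columns `T`,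
so that `M y = y - A_T u` and `A_Tᵀ M = 0`, whence `‖A_T u‖² = ⟨y, A_T u⟩`. The RIP lower bound and
restricted orthogonality then give `(1 - δ_k) ‖u‖ ≤ θ_{S,k} ‖v‖`. For `w = A_{Ť_d}ᵀ M y` we get
`‖w‖² = ⟨A_{Ť_d} w, y⟩ - ⟨A_{Ť_d} w, A_T u⟩ ≤ (θ_{Š,S} ‖v‖ + θ_{Š,k} ‖u‖) ‖w‖`. -/

section L2

variable {ι : Type*} [Fintype ι]

lemma l2_nonneg (v : ι → ℝ) : 0 ≤ l2 v := Real.sqrt_nonneg _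

lemma l2_sq (v : ι → ℝ) : l2 v ^ 2 = ∑ i, v i ^ 2 :=
  Real.sq_sqrt (by positivity)

lemma dotProduct_self_eq_l2_sq (v : ι → ℝ) : v ⬝ᵥ v = l2 v ^ 2 := by
  rw [l2_sq]
  simp only [dotProduct, sq]

lemma abs_dotProduct_le_l2_mul_l2 (f g : ι → ℝ) : |f ⬝ᵥ g| ≤ l2 f * l2 g := by
  rw [← Real.sqrt_sq_eq_abs, l2, l2, ← Real.sqrt_mul (by positivity)]
  exact Real.sqrt_le_sqrt (Finset.sum_mul_sq_le_sq_mul_sq _ f g)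

lemma sum_sq_mulVec_le {ι' : Type*} [Fintype ι'] (B : Matrix ι' ι ℝ) (c : ι → ℝ) :
    ∑ i, (B *ᵥ c) i ^ 2 ≤ (∑ i, ∑ j, B i j ^ 2) * ∑ j, c j ^ 2 := by
  rw [Finset.sum_mul]
  gcongr with i
  exact Finset.sum_mul_sq_le_sq_mul_sq _ (B i) c

end L2

lemma le_csInf_mul {s : Set ℝ} (hs : s.Nonempty) {a x : ℝ} (hx : 0 ≤ x)
    (h : ∀ δ ∈ s, a ≤ δ * x) : a ≤ sInf s * x := by
  rcases hx.eq_or_lt with rfl | hx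
  · obtain ⟨δ, hδ⟩ := hs
    simpa using h δ hδ
  · rw [← div_le_iff₀ hx]
    exact le_csInf hs fun δ hδ => (div_le_iff₀ hx).2 (h δ hδ)

section RestrictedConstants

variable {m n : ℕ} (A : Matrix (Fin m) (Fin n) ℝ)

lemma sum_sq_cols_le (T : Finset (Fin n)) :
    ∑ i, ∑ j, cols A T i j ^ 2 ≤ ∑ i, ∑ j, A i j ^ 2 := by
  gcongr with i
  change ∑ j : T, A i j ^ 2 ≤ _
  rw [Finset.sum_coe_sort T fun j => A i j ^ 2]
  exact Finset.sum_le_sum_of_subset_of_nonneg (Finset.subset_univ T) fun _ _ _ => sq_nonneg _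

lemma l2_cols_mulVec_le (T : Finset (Fin n)) (c : {j // j ∈ T} → ℝ) :
    l2 (cols A T *ᵥ c) ≤ √(∑ i, ∑ j, A i j ^ 2) * l2 c := by
  rw [l2, l2, ← Real.sqrt_mul (by positivity)]
  gcongr
  exact (sum_sq_mulVec_le _ c).trans
    (mul_le_mul_of_nonneg_right (sum_sq_cols_le A T) (by positivity))

lemma exists_ripBound (S : ℕ) : ∃ δ, 0 ≤ δ ∧ RIPBound A S δ := by
  set C := ∑ i, ∑ j, A i j ^ 2
  have hC : 0 ≤ C := by positivity
  refine ⟨C + 1, by positivity, fun T _ c => ⟨?_, ?_⟩⟩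
  · have : (1 - (C + 1)) * ∑ j, c j ^ 2 ≤ 0 :=
      mul_nonpos_of_nonpos_of_nonneg (by linarith) (by positivity)
    exact this.trans (by positivity)
  · have := (sum_sq_mulVec_le (cols A T) c).trans
      (mul_le_mul_of_nonneg_right (sum_sq_cols_le A T) (by positivity))
    nlinarith [show 0 ≤ ∑ j, c j ^ 2 by positivity]

lemma exists_rocBound (S₁ S₂ : ℕ) : ∃ θ, 0 ≤ θ ∧ ROCBound A S₁ S₂ θ := by
  set C := ∑ i, ∑ j, A i j ^ 2
  refine ⟨C, by positivity, fun T₁ T₂ _ _ _ c₁ c₂ => ?_⟩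
  calc |(cols A T₁ *ᵥ c₁) ⬝ᵥ (cols A T₂ *ᵥ c₂)|
      ≤ l2 (cols A T₁ *ᵥ c₁) * l2 (cols A T₂ *ᵥ c₂) := abs_dotProduct_le_l2_mul_l2 _ _
    _ ≤ (√C * l2 c₁) * (√C * l2 c₂) :=
      mul_le_mul (l2_cols_mulVec_le A T₁ c₁) (l2_cols_mulVec_le A T₂ c₂) (l2_nonneg _)
        (by positivity [l2_nonneg c₁])
    _ = √C * √C * l2 c₁ * l2 c₂ := by ring
    _ = C * l2 c₁ * l2 c₂ := by rw [Real.mul_self_sqrt (by positivity)]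

lemma one_sub_ripConst_mul_le {S : ℕ} {T : Finset (Fin n)} (hT : T.card ≤ S)
    (c : {j // j ∈ T} → ℝ) : (1 - ripConst A S) * l2 c ^ 2 ≤ l2 (cols A T *ᵥ c) ^ 2 := by
  have : l2 c ^ 2 - l2 (cols A T *ᵥ c) ^ 2 ≤ ripConst A S * l2 c ^ 2 :=
    le_csInf_mul (exists_ripBound A S) (sq_nonneg (l2 c)) fun δ hδ => by
      have := (hδ.2 T hT c).1
      rw [l2_sq, l2_sq]
      linarith
  linarith

lemma rocConst_nonneg (S₁ S₂ : ℕ) : 0 ≤ rocConst A S₁ S₂ :=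
  Real.sInf_nonneg fun _ hθ => hθ.1

lemma abs_dotProduct_le_rocConst {S₁ S₂ : ℕ} {T₁ T₂ : Finset (Fin n)} (hT : Disjoint T₁ T₂)
    (hT₁ : T₁.card ≤ S₁) (hT₂ : T₂.card ≤ S₂) (c₁ : {j // j ∈ T₁} → ℝ) (c₂ : {j // j ∈ T₂} → ℝ) :
    |(cols A T₁ *ᵥ c₁) ⬝ᵥ (cols A T₂ *ᵥ c₂)| ≤ rocConst A S₁ S₂ * l2 c₁ * l2 c₂ := by
  rw [mul_assoc]
  exact le_csInf_mul (exists_rocBound A S₁ S₂) (by positivity [l2_nonneg c₁, l2_nonneg c₂])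
    fun θ hθ => by rw [← mul_assoc]; exact hθ.2 T₁ T₂ hT hT₁ hT₂ c₁ c₂

end RestrictedConstants

lemma le_of_mul_mul_self_le_mul {a b c : ℝ} (ha : 0 ≤ a) (hc : 0 ≤ c) (h : b * a * a ≤ c * a) :
    b * a ≤ c := by
  rcases ha.eq_or_lt with rfl | ha
  · simpa using hc
  · exact le_of_mul_le_mul_right h ha

lemma isUnit_det_transpose_mul_self {ι ι' : Type*} [Fintype ι] [Fintype ι'] [DecidableEq ι]
    {B : Matrix ι' ι ℝ} (hB : Function.Injective B.mulVec) : IsUnit (Bᵀ * B).det := by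
  rw [← isUnit_iff_isUnit_det, ← mulVec_injective_iff_isUnit]
  intro x y h
  apply hB
  rw [← sub_eq_zero, ← mulVec_sub] at h ⊢
  rwa [← conjTranspose_eq_transpose_of_trivial, conjTranspose_mul_self_mulVec_eq_zero] at h

section Projection

variable {m n : ℕ} (A : Matrix (Fin m) (Fin n) ℝ) (T : Finset (Fin n))

lemma injective_cols_mulVec {k : ℕ} (hT : T.card ≤ k) (hδ : ripConst A k < 1) :
    Function.Injective (cols A T).mulVec := by
  intro x y hxy
  have h := one_sub_ripConst_mul_le A hT (x - y)
  rw [mulVec_sub, hxy, sub_self, ← dotProduct_self_eq_l2_sq (0 : Fin m → ℝ),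
    dotProduct_zero] at h
  have h0 : l2 (x - y) ^ 2 = 0 := le_antisymm (by nlinarith) (sq_nonneg _)
  rw [← dotProduct_self_eq_l2_sq, dotProduct_self_eq_zero, sub_eq_zero] at h0
  exact h0

noncomputable def leastSquaresCoeff (y : Fin m → ℝ) : {j // j ∈ T} → ℝ :=
  ((cols A T)ᵀ * cols A T)⁻¹ *ᵥ ((cols A T)ᵀ *ᵥ y)

lemma projM_mulVec (y : Fin m → ℝ) :
    projM A T *ᵥ y = y - cols A T *ᵥ leastSquaresCoeff A T y := by
  simp only [projM, leastSquaresCoeff, sub_mulVec, one_mulVec, mulVec_mulVec, Matrix.mul_assoc]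

variable {A T}

lemma transpose_mul_projM (hG : IsUnit ((cols A T)ᵀ * cols A T).det) :
    (cols A T)ᵀ * projM A T = 0 := by
  rw [projM, Matrix.mul_sub, Matrix.mul_one, ← Matrix.mul_assoc, ← Matrix.mul_assoc,
    Matrix.mul_nonsing_inv _ hG, Matrix.one_mul, sub_self]

lemma l2_sq_cols_mulVec_leastSquaresCoeff (hG : IsUnit ((cols A T)ᵀ * cols A T).det)
    (y : Fin m → ℝ) :
    l2 (cols A T *ᵥ leastSquaresCoeff A T y) ^ 2 = y ⬝ᵥ (cols A T *ᵥ leastSquaresCoeff A T y) := by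
  have h : (projM A T *ᵥ y) ⬝ᵥ (cols A T *ᵥ leastSquaresCoeff A T y) = 0 := by
    rw [dotProduct_mulVec, ← mulVec_transpose, mulVec_mulVec, transpose_mul_projM hG,
      zero_mulVec, zero_dotProduct]
  rw [projM_mulVec, sub_dotProduct, sub_eq_zero] at h
  rw [← dotProduct_self_eq_l2_sq, ← h]

lemma one_sub_ripConst_mul_l2_leastSquaresCoeff_le {k S : ℕ} {Td : Finset (Fin n)}
    (hT : T.card ≤ k) (hG : IsUnit ((cols A T)ᵀ * cols A T).det) (hTd : Td.card ≤ S)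
    (h : Disjoint T Td) (v : {j // j ∈ Td} → ℝ) :
    (1 - ripConst A k) * l2 (leastSquaresCoeff A T (cols A Td *ᵥ v)) ≤ rocConst A S k * l2 v := by
  set u := leastSquaresCoeff A T (cols A Td *ᵥ v)
  refine le_of_mul_mul_self_le_mul (l2_nonneg u)
    (mul_nonneg (rocConst_nonneg A S k) (l2_nonneg v)) ?_
  calc (1 - ripConst A k) * l2 u * l2 u = (1 - ripConst A k) * l2 u ^ 2 := by ring
    _ ≤ l2 (cols A T *ᵥ u) ^ 2 := one_sub_ripConst_mul_le A hT u
    _ = (cols A Td *ᵥ v) ⬝ᵥ (cols A T *ᵥ u) := l2_sq_cols_mulVec_leastSquaresCoeff hG _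
    _ ≤ |(cols A Td *ᵥ v) ⬝ᵥ (cols A T *ᵥ u)| := le_abs_self _
    _ ≤ rocConst A S k * l2 v * l2 u := abs_dotProduct_le_rocConst A h.symm hTd hT v u

lemma l2_transpose_mul_projM_mulVec_le {k S S' : ℕ} {Td Td' : Finset (Fin n)}
    (hT : T.card ≤ k) (hTd : Td.card ≤ S) (hTd' : Td'.card ≤ S') (h₁ : Disjoint T Td')
    (h₂ : Disjoint Td Td') (v : {j // j ∈ Td} → ℝ) :
    l2 (((cols A Td')ᵀ * projM A T * cols A Td) *ᵥ v) ≤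
      rocConst A S' S * l2 v + rocConst A S' k * l2 (leastSquaresCoeff A T (cols A Td *ᵥ v)) := by
  set w := ((cols A Td')ᵀ * projM A T * cols A Td) *ᵥ v
  set u := leastSquaresCoeff A T (cols A Td *ᵥ v)
  have hw : w = (cols A Td')ᵀ *ᵥ (cols A Td *ᵥ v - cols A T *ᵥ u) := by
    rw [← projM_mulVec, mulVec_mulVec, mulVec_mulVec]
  have habs := add_le_add (le_abs_self ((cols A Td' *ᵥ w) ⬝ᵥ (cols A Td *ᵥ v)))
    (neg_abs_le ((cols A Td' *ᵥ w) ⬝ᵥ (cols A T *ᵥ u)))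
  have hc : 0 ≤ rocConst A S' S * l2 v + rocConst A S' k * l2 u :=
    add_nonneg (mul_nonneg (rocConst_nonneg A S' S) (l2_nonneg v))
      (mul_nonneg (rocConst_nonneg A S' k) (l2_nonneg u))
  rw [← one_mul (l2 w)]
  refine le_of_mul_mul_self_le_mul (l2_nonneg w) hc ?_
  calc 1 * l2 w * l2 w = w ⬝ᵥ w := by rw [dotProduct_self_eq_l2_sq]; ring
    _ = (cols A Td' *ᵥ w) ⬝ᵥ (cols A Td *ᵥ v) - (cols A Td' *ᵥ w) ⬝ᵥ (cols A T *ᵥ u) := by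
      nth_rw 2 [hw]
      rw [dotProduct_mulVec, vecMul_transpose, dotProduct_sub]
    _ ≤ rocConst A S' S * l2 w * l2 v + rocConst A S' k * l2 w * l2 u := by
      linarith [abs_dotProduct_le_rocConst A h₂.symm hTd' hTd w v,
        abs_dotProduct_le_rocConst A h₁.symm hTd' hT w u]
    _ = (rocConst A S' S * l2 v + rocConst A S' k * l2 u) * l2 w := by ring

end Projection

theorem stmt6 {m n k S S' : ℕ} (A : Matrix (Fin m) (Fin n) ℝ)
    (T Td Td' : Finset (Fin n)) (hT : T.card = k) (hδk : ripConst A k < 1)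
    (hTd : Td.card ≤ S) (hTd' : Td'.card ≤ S')
    (h1 : Disjoint T Td) (h2 : Disjoint T Td') (h3 : Disjoint Td Td') :
    ∀ v : {j // j ∈ Td} → ℝ,
      l2 (((cols A Td')ᵀ * projM A T * cols A Td).mulVec v) ≤
        (rocConst A S' S + rocConst A S' k * rocConst A S k / (1 - ripConst A k)) * l2 v := by
  intro v
  have hG := isUnit_det_transpose_mul_self (injective_cols_mulVec A T hT.le hδk)
  have hu := one_sub_ripConst_mul_l2_leastSquaresCoeff_le hT.le hG hTd h1 v
  set u := leastSquaresCoeff A T (cols A Td *ᵥ v)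
  calc _ ≤ rocConst A S' S * l2 v + rocConst A S' k * l2 u :=
        l2_transpose_mul_projM_mulVec_le hT.le hTd hTd' h2 h3 v
    _ ≤ rocConst A S' S * l2 v +
          rocConst A S' k * (rocConst A S k * l2 v / (1 - ripConst A k)) := by
        gcongr
        · exact rocConst_nonneg A S' k
        · rw [le_div_iff₀ (by linarith)]
          linarith
    _ = _ := by ring
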